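/- Ῡ is not a gauge-type function under the sup norm (Remark 3.2(iv)): For d = 1 and n ∈ ℕ⁺, define x^n, y^n ∈ 𝒞₀ by x^n(θ) := (1+nθ)·1_{[-1/n,0]}(θ) and y^n(θ) := ((2+nθ) ∧ 1)·1_{[-2/n,0]}(θ) for θ ∈ (-∞,0], and set t_n := 0, s_n := 1/n. Then Ῡ(t_n, x^n, s_n, y^n) → 0 as n → ∞, while |x^n - y^n|_C = 1 for every n, so that |(t_n,x^n) - (s_n,y^n)|₁ := |t_n - s_n| + |x^n - y^n|_C ≥ 1. In particular, Ῡ does not satisfy the gauge-type condition with respect to the norm metric |(t,x)|₁ = |t| + |x|_C on Λ: it is false that for every ε > 0 there is δ > 0 such that Ῡ(t,x,s,y) ≤ δ implies |t-s| + |x-y|_C < ε. -/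

import Mathlib

open Filter Topology MeasureTheory Matrix
open scoped RealInnerProductSpace

noncomputable section

namespace PathHJB

/-- The domain `(-∞,0]` of the paths. -/
abbrev PathDom : Type := Set.Iic (0 : ℝ)

abbrev Eucl (d : ℕ) := EuclideanSpace ℝ (Fin d)

/-- Paths on `(-∞,0]` with values in `ℝ^d`. -/
abbrev Pth (d : ℕ) := PathDom → Eucl d

def zeroPt : PathDom := ⟨0, Set.self_mem_Iic⟩

/-- The sup norm `|x|_C`. -/
def normC {d : ℕ} (x : Pth d) : ℝ := ⨆ θ : PathDom, ‖x θ‖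

/-- The shifted path `x_h`. -/
def shift {d : ℕ} (x : Pth d) (h : ℝ) : Pth d := fun θ =>
  if hθ : -h ≤ θ.1 then x zeroPt
  else x ⟨θ.1 + h, Set.mem_Iic.mpr (by push_neg at hθ; linarith)⟩

/-- The vertical perturbation `x + v · 1_{{0}}`. -/
def vpert {d : ℕ} (x : Pth d) (v : Eucl d) : Pth d := fun θ =>
  if θ.1 = 0 then x θ + v else x θ

/-- Càdlàg: right-continuous with left limits. -/
def IsCadlag {d : ℕ} (x : Pth d) : Prop :=
  (∀ θ : PathDom, ContinuousWithinAt x {η : PathDom | θ.1 ≤ η.1} θ) ∧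
  (∀ θ : PathDom, ∃ L : Eucl d, Tendsto x (nhdsWithin θ {η : PathDom | η.1 < θ.1}) (nhds L))

/-- `𝒟₀`: càdlàg paths vanishing at `-∞`. -/
def D0 (d : ℕ) : Set (Pth d) := {x | IsCadlag x ∧ Tendsto x atBot (nhds 0)}

/-- `𝒞₀`: continuous paths vanishing at `-∞`. -/
def C0 (d : ℕ) : Set (Pth d) := {x | Continuous x ∧ Tendsto x atBot (nhds 0)}

/-- The metric `d_∞`. -/
def dInfty {d : ℕ} (p q : ℝ × Pth d) : ℝ :=
  if p.1 ≤ q.1 then |q.1 - p.1| + normC (shift p.2 (q.1 - p.1) - q.2)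
  else |p.1 - q.1| + normC (shift q.2 (p.1 - q.1) - p.2)

/-- `Λ̂^t = [t,∞) × 𝒟₀`. -/
def LamHat (d : ℕ) (t : ℝ) : Set (ℝ × Pth d) := {p | t ≤ p.1 ∧ p.2 ∈ D0 d}

/-- `Λ^t = [t,∞) × 𝒞₀`. -/
def Lam (d : ℕ) (t : ℝ) : Set (ℝ × Pth d) := {p | t ≤ p.1 ∧ p.2 ∈ C0 d}

def stdBasis (d : ℕ) (i : Fin d) : Eucl d := EuclideanSpace.single i 1

/-- Horizontal (Dupire) derivative. -/
def HasHorizDerivAt {d : ℕ} (f : ℝ × Pth d → ℝ) (p : ℝ × Pth d) (v : ℝ) : Prop :=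
  Tendsto (fun h : ℝ => (f (p.1 + h, shift p.2 h) - f p) / h) (𝓝[>] (0:ℝ)) (𝓝 v)

/-- Vertical (Dupire) derivative in direction `e_i`. -/
def HasVertDerivAt {d : ℕ} (f : ℝ × Pth d → ℝ) (p : ℝ × Pth d) (i : Fin d) (v : ℝ) : Prop :=
  Tendsto (fun h : ℝ => (f (p.1, vpert p.2 (h • stdBasis d i)) - f p) / h) (𝓝[≠] (0:ℝ)) (𝓝 v)

/-- Continuity on a set w.r.t. `d_∞`. -/
def DContinuousOn {d : ℕ} {E : Type*} [NormedAddCommGroup E]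
    (f : ℝ × Pth d → E) (S : Set (ℝ × Pth d)) : Prop :=
  ∀ p ∈ S, ∀ ε > (0:ℝ), ∃ δ > (0:ℝ), ∀ q ∈ S, dInfty p q < δ → ‖f q - f p‖ < ε

/-- Uniform continuity on a set w.r.t. `d_∞`. -/
def DUnifContOn {d : ℕ} {E : Type*} [NormedAddCommGroup E]
    (f : ℝ × Pth d → E) (S : Set (ℝ × Pth d)) : Prop :=
  ∀ ε > (0:ℝ), ∃ δ > (0:ℝ), ∀ p ∈ S, ∀ q ∈ S, dInfty p q < δ → ‖f q - f p‖ < ε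

def BoundedOn {d : ℕ} {E : Type*} [NormedAddCommGroup E]
    (f : ℝ × Pth d → E) (S : Set (ℝ × Pth d)) : Prop :=
  ∃ M : ℝ, ∀ p ∈ S, ‖f p‖ ≤ M

def PolyGrowthOn {d : ℕ} {E : Type*} [NormedAddCommGroup E]
    (f : ℝ × Pth d → E) (S : Set (ℝ × Pth d)) : Prop :=
  ∃ C : ℝ, ∃ k : ℕ, ∀ p ∈ S, ‖f p‖ ≤ C * (1 + |p.1| + normC p.2) ^ k

/-- `f ∈ C_p^{1,2}(Λ̂^t)`, with prescribed pathwise derivatives. -/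
structure IsCp12Hat (d : ℕ) (t : ℝ) (f : ℝ × Pth d → ℝ) (ft : ℝ × Pth d → ℝ)
    (fx : ℝ × Pth d → Eucl d) (fxx : ℝ × Pth d → Matrix (Fin d) (Fin d) ℝ) : Prop where
  horiz : ∀ p ∈ LamHat d t, HasHorizDerivAt f p (ft p)
  vert : ∀ p ∈ LamHat d t, ∀ i, HasVertDerivAt f p i (fx p i)
  vert2 : ∀ p ∈ LamHat d t, ∀ i j, HasVertDerivAt (fun q => fx q j) p i (fxx p i j)
  cont : DContinuousOn f (LamHat d t)
  cont_t : DContinuousOn ft (LamHat d t)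
  cont_x : DContinuousOn fx (LamHat d t)
  cont_xx : ∀ i j, DContinuousOn (fun p => fxx p i j) (LamHat d t)
  growth : PolyGrowthOn f (LamHat d t)
  growth_t : PolyGrowthOn ft (LamHat d t)
  growth_x : PolyGrowthOn fx (LamHat d t)
  growth_xx : ∀ i j, PolyGrowthOn (fun p => fxx p i j) (LamHat d t)

/-- Hilbert–Schmidt norm of a matrix. -/
def hsNorm {m n : ℕ} (A : Matrix (Fin m) (Fin n) ℝ) : ℝ :=
  Real.sqrt (∑ i, ∑ j, (A i j) ^ 2)

/-- The Hamiltonian `H`. -/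
def Ham {d n : ℕ} {U : Type*} (b : Pth d → U → Eucl d)
    (σ' : Pth d → U → Matrix (Fin d) (Fin n) ℝ) (q : Pth d → U → ℝ)
    (x : Pth d) (p : Eucl d) (l : Matrix (Fin d) (Fin d) ℝ) : ℝ :=
  ⨅ u : U, ((inner ℝ p (b x u) : ℝ) + (1/2) * (l * (σ' x u * (σ' x u)ᵀ)).trace + q x u)

/-- Hypothesis 4.2. -/
structure Hyp42 {d n : ℕ} {U : Type*} [PseudoMetricSpace U] (L : ℝ)
    (b : Pth d → U → Eucl d) (σ' : Pth d → U → Matrix (Fin d) (Fin n) ℝ)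
    (q : Pth d → U → ℝ) : Prop where
  pos : 0 < L
  continuous : ∀ x ∈ C0 d, ∀ u : U, ∀ ε > (0:ℝ), ∃ δ > (0:ℝ), ∀ y ∈ C0 d, ∀ u' : U,
    normC (x - y) < δ → dist u u' < δ →
    ‖b x u - b y u'‖ < ε ∧ hsNorm (σ' x u - σ' y u') < ε ∧ |q x u - q y u'| < ε
  bound_b : ∀ x ∈ C0 d, ∀ u : U, ‖b x u‖ ^ 2 ≤ L ^ 2 * (1 + normC x ^ 2)
  bound_σ : ∀ x ∈ C0 d, ∀ u : U, hsNorm (σ' x u) ^ 2 ≤ L ^ 2 * (1 + normC x ^ 2)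
  bound_q : ∀ x ∈ C0 d, ∀ u : U, (q x u) ^ 2 ≤ L ^ 2 * (1 + normC x ^ 2)
  lip_b : ∀ x ∈ C0 d, ∀ y ∈ C0 d, ∀ u : U, ‖b x u - b y u‖ ≤ L * normC (x - y)
  lip_σ : ∀ x ∈ C0 d, ∀ y ∈ C0 d, ∀ u : U, hsNorm (σ' x u - σ' y u) ≤ L * normC (x - y)
  lip_q : ∀ x ∈ C0 d, ∀ y ∈ C0 d, ∀ u : U, |q x u - q y u| ≤ L * normC (x - y)

/-- Viscosity subsolution of `-λ w + ∂_t w + H(x, ∂_x w, ∂_{xx} w) = 0`. -/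
def IsViscSubsol {d n : ℕ} {U : Type*} (lam : ℝ) (b : Pth d → U → Eucl d)
    (σ' : Pth d → U → Matrix (Fin d) (Fin n) ℝ) (q : Pth d → U → ℝ)
    (w : Pth d → ℝ) : Prop :=
  ∀ s : ℝ, 0 ≤ s → ∀ x ∈ C0 d,
    ∀ (φ φt : ℝ × Pth d → ℝ) (φx : ℝ × Pth d → Eucl d)
      (φxx : ℝ × Pth d → Matrix (Fin d) (Fin d) ℝ),
      IsCp12Hat d s φ φt φx φxx →
      w x - φ (s, x) = 0 →
      (∀ p ∈ Lam d s, w p.2 - φ p ≤ 0) →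
      0 ≤ -lam * w x + φt (s, x) + Ham b σ' q x (φx (s, x)) (φxx (s, x))

/-- Viscosity supersolution. -/
def IsViscSupersol {d n : ℕ} {U : Type*} (lam : ℝ) (b : Pth d → U → Eucl d)
    (σ' : Pth d → U → Matrix (Fin d) (Fin n) ℝ) (q : Pth d → U → ℝ)
    (w : Pth d → ℝ) : Prop :=
  ∀ s : ℝ, 0 ≤ s → ∀ x ∈ C0 d,
    ∀ (φ φt : ℝ × Pth d → ℝ) (φx : ℝ × Pth d → Eucl d)
      (φxx : ℝ × Pth d → Matrix (Fin d) (Fin d) ℝ),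
      IsCp12Hat d s φ φt φx φxx →
      w x + φ (s, x) = 0 →
      (∀ p ∈ Lam d s, 0 ≤ w p.2 + φ p) →
      -lam * w x - φt (s, x) + Ham b σ' q x (-φx (s, x)) (-φxx (s, x)) ≤ 0


/-- The two-argument functional `S_m(t,x,s,y)`. -/
def SmP {d : ℕ} (m : ℕ) (p q : ℝ × Pth d) : ℝ :=
  if normC (shift p.2 (max (q.1 - p.1) 0) - shift q.2 (max (p.1 - q.1) 0)) = 0 then 0
  else (normC (shift p.2 (max (q.1 - p.1) 0) - shift q.2 (max (p.1 - q.1) 0)) ^ (2*m)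
        - ‖p.2 zeroPt - q.2 zeroPt‖ ^ (2*m)) ^ 3
       / normC (shift p.2 (max (q.1 - p.1) 0) - shift q.2 (max (p.1 - q.1) 0)) ^ (4*m)

/-- `Υ^{m,M}(t,x,s,y)`. -/
def UpsP {d : ℕ} (m : ℕ) (M : ℝ) (p q : ℝ × Pth d) : ℝ :=
  SmP m p q + M * ‖p.2 zeroPt - q.2 zeroPt‖ ^ (2*m)

/-- `Ῡ^{m,M}(t,x,s,y) = Υ^{m,M}(t,x,s,y) + |s-t|²`. -/
def UpsBarP {d : ℕ} (m : ℕ) (M : ℝ) (p q : ℝ × Pth d) : ℝ :=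
  UpsP m M p q + (q.1 - p.1) ^ 2

/-- The single-path functional `Υ^{m,M}(x)`. -/
def Ups0 {d : ℕ} (m : ℕ) (M : ℝ) (x : Pth d) : ℝ :=
  (if normC x = 0 then 0
   else (normC x ^ (2*m) - ‖x zeroPt‖ ^ (2*m)) ^ 3 / normC x ^ (4*m))
  + M * ‖x zeroPt‖ ^ (2*m)

/-- `w̃^{t̂}` before taking the upper semicontinuous envelope:
the sup of `w(t,ξ)` over `ξ ∈ 𝒞₀` with `ξ(0) = x₀`. -/
def sliceSup {d : ℕ} (w : ℝ × Pth d → ℝ) (t : ℝ) (x0 : Eucl d) : ℝ :=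
  sSup {r : ℝ | ∃ ξ ∈ C0 d, ξ zeroPt = x0 ∧ r = w (t, ξ)}

def tildeW {d : ℕ} (w : ℝ × Pth d → ℝ) (tHat : ℝ) : ℝ × Eucl d → ℝ := fun p =>
  if tHat ≤ p.1 then sliceSup w p.1 p.2
  else sliceSup w tHat p.2 - Real.sqrt (tHat - p.1)

/-- Upper semicontinuous envelope. -/
def uscEnv {d : ℕ} (g : ℝ × Eucl d → ℝ) : ℝ × Eucl d → ℝ := fun p =>
  Filter.limsup g (nhds p)

/-- A local modulus of continuity. -/
structure LocalModulus (ρ : ℝ → ℝ → ℝ) : Prop where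
  cont : Continuous fun p : ℝ × ℝ => ρ p.1 p.2
  nonneg : ∀ t r, 0 ≤ t → 0 ≤ r → 0 ≤ ρ t r
  zero : ∀ r, 0 ≤ r → ρ 0 r = 0
  subadd : ∀ t s r, 0 ≤ t → 0 ≤ s → 0 ≤ r → ρ (t + s) r ≤ ρ t r + ρ s r
  mono : ∀ t r r', 0 ≤ t → 0 ≤ r → r ≤ r' → ρ t r ≤ ρ t r'

/-- Upper semicontinuity on a set w.r.t. `d_∞`. -/
def DUSCOn {d : ℕ} (w : ℝ × Pth d → ℝ) (S : Set (ℝ × Pth d)) : Prop :=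
  ∀ p ∈ S, ∀ ε > (0:ℝ), ∃ δ > (0:ℝ), ∀ q ∈ S, dInfty p q < δ → w q < w p + ε

def BddAboveOn {d : ℕ} (w : ℝ × Pth d → ℝ) (S : Set (ℝ × Pth d)) : Prop :=
  ∃ M : ℝ, ∀ p ∈ S, w p ≤ M

/-- `limsup_{t+|x|_C → ∞} w(t,x)/(t+|x|_C) < 0` on `Λ`. -/
def NegLimsupAtInfty {d : ℕ} (w : ℝ × Pth d → ℝ) : Prop :=
  ∃ c < (0:ℝ), ∃ R : ℝ, ∀ p ∈ Lam d 0, R ≤ p.1 + normC p.2 →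
    w p ≤ c * (p.1 + normC p.2)

/-- `φ ∈ C^{1,2}([0,∞) × ℝ^d)` with prescribed derivatives. -/
structure IsC12Fin (d : ℕ) (φ φt : ℝ × Eucl d → ℝ) (φx : ℝ × Eucl d → Eucl d)
    (φxx : ℝ × Eucl d → Matrix (Fin d) (Fin d) ℝ) : Prop where
  ht : ∀ p : ℝ × Eucl d, HasDerivAt (fun s => φ (s, p.2)) (φt p) p.1
  hx : ∀ p : ℝ × Eucl d, HasGradientAt (fun y => φ (p.1, y)) (φx p) p.2
  hxx : ∀ p : ℝ × Eucl d, ∀ i j,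
    HasDerivAt (fun h : ℝ => φx (p.1, p.2 + h • stdBasis d j) i) (φxx p i j) 0
  cont : Continuous φ
  cont_t : Continuous φt
  cont_x : Continuous φx
  cont_xx : ∀ i j, Continuous fun p => φxx p i j

/-- The class `Φ(t̂, x̂₀, T)` of Definition 6.1. -/
def PhiClass (d : ℕ) (tHat : ℝ) (xHat0 : Eucl d) (T : ℝ) (f : ℝ × Eucl d → ℝ) : Prop :=
  ∃ r > (0:ℝ), ∀ L > (0:ℝ),
    ∀ (φ φt : ℝ × Eucl d → ℝ) (φx : ℝ × Eucl d → Eucl d)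
      (φxx : ℝ × Eucl d → Matrix (Fin d) (Fin d) ℝ),
      IsC12Fin d φ φt φx φxx →
      ∀ t : ℝ, ∀ x0 : Eucl d, 0 < t → t < T →
        (∀ s : ℝ, ∀ y : Eucl d, 0 ≤ s → s ≤ T → f (s, y) - φ (s, y) ≤ f (t, x0) - φ (t, x0)) →
        ∃ C > (0:ℝ),
          (|t - tHat| + ‖x0 - xHat0‖ < r →
           |f (t, x0)| + ‖φx (t, x0)‖ + hsNorm (φxx (t, x0)) ≤ L →
           C ≤ φt (t, x0))

/-- Operator norm of a square matrix, via the associated Euclidean linear map. -/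
def matOpNorm {ι : Type*} [Fintype ι] [DecidableEq ι] (A : Matrix ι ι ℝ) : ℝ :=
  ‖LinearMap.toContinuousLinearMap (Matrix.toEuclideanLin A)‖

/-- The second-derivative matrix of `φ : ℝ^d × ℝ^d → ℝ` at a point, as a
`(2d) × (2d)` matrix indexed by `Fin d ⊕ Fin d`. -/
def hess2 {d : ℕ} (φ : Eucl d × Eucl d → ℝ) (z : Eucl d × Eucl d) :
    Matrix (Fin d ⊕ Fin d) (Fin d ⊕ Fin d) ℝ := fun k l =>
  iteratedFDeriv ℝ 2 φ z
    ![Sum.elim (fun i => ((stdBasis d i, 0) : Eucl d × Eucl d))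
        (fun j => ((0, stdBasis d j) : Eucl d × Eucl d)) k,
      Sum.elim (fun i => ((stdBasis d i, 0) : Eucl d × Eucl d))
        (fun j => ((0, stdBasis d j) : Eucl d × Eucl d)) l]

/-- Hessian matrix of `φ : ℝ^d → ℝ`. -/
def hess1 {d : ℕ} (φ : Eucl d → ℝ) (z : Eucl d) : Matrix (Fin d) (Fin d) ℝ := fun i j =>
  iteratedFDeriv ℝ 2 φ z ![stdBasis d i, stdBasis d j]


/-- The path `x - a_{t-t̂}` appearing in `S_m(t,x,t̂,a)` (for `t ≥ t̂`). -/
def zRel {d : ℕ} (tHat : ℝ) (a : Pth d) (p : ℝ × Pth d) : Pth d :=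
  shift p.2 (max (tHat - p.1) 0) - shift a (max (p.1 - tHat) 0)
/-- The path `x^n` of Remark 3.2(iv). -/
def remXn (n : ℕ) : Pth 1 := fun θ =>
  EuclideanSpace.single 0 (if -(1 / (n:ℝ)) ≤ θ.1 then 1 + (n:ℝ) * θ.1 else 0)

/-- The path `y^n` of Remark 3.2(iv). -/
def remYn (n : ℕ) : Pth 1 := fun θ =>
  EuclideanSpace.single 0 (if -(2 / (n:ℝ)) ≤ θ.1 then min (2 + (n:ℝ) * θ.1) 1 else 0)

/-
The shift by `1/n` carries `x^n` exactly onto `y^n`, and both paths equal `1` at time `0`;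
hence the path part of `Ῡ` vanishes and `Ῡ(0, x^n, 1/n, y^n) = 1/n²`. Without the shift, the
paths differ by `1` at `θ = -1/n`, where `x^n` has already dropped to `0` while `y^n` is still `1`.
-/

instance : Nonempty PathDom := ⟨zeroPt⟩

section General

variable {d : ℕ}

lemma shift_zero (x : Pth d) : shift x 0 = x := by
  funext θ
  unfold shift
  split_ifs with h
  · rw [show θ = zeroPt from Subtype.ext (show θ.1 = 0 from le_antisymm θ.2 (by simpa using h))]
  · simp only [add_zero]

lemma shift_apply_zeroPt (x : Pth d) {h : ℝ} (hh : 0 ≤ h) : shift x h zeroPt = x zeroPt := by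
  unfold shift
  rw [dif_pos (by simpa [zeroPt] using hh)]

lemma normC_zero : normC (0 : Pth d) = 0 := by
  simp [normC]

lemma normC_eq_of_forall_le {x : Pth d} {c : ℝ} (hle : ∀ θ, ‖x θ‖ ≤ c) (θ₀ : PathDom)
    (hθ₀ : ‖x θ₀‖ = c) : normC x = c :=
  le_antisymm (ciSup_le hle) (hθ₀ ▸ le_ciSup ⟨c, Set.forall_mem_range.mpr hle⟩ θ₀)

lemma upsBarP_eq_sq_of_shift_eq {m : ℕ} (hm : m ≠ 0) (M : ℝ) {t s : ℝ} (hts : t ≤ s)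
    {x y : Pth d} (hxy : shift x (s - t) = y) : UpsBarP m M (t, x) (s, y) = (s - t) ^ 2 := by
  have hpath : shift x (max (s - t) 0) - shift y (max (t - s) 0) = 0 := by
    rw [max_eq_left (sub_nonneg.mpr hts), max_eq_right (sub_nonpos.mpr hts), shift_zero, hxy,
      sub_self]
  have hzero : x zeroPt - y zeroPt = 0 := by
    rw [← hxy, shift_apply_zeroPt x (sub_nonneg.mpr hts), sub_self]
  simp [UpsBarP, UpsP, SmP, hpath, hzero, normC_zero, hm]

end General

def GaugeTypeOn {α : Type*} (S : Set α) (Υ ρ : α → α → ℝ) : Prop :=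
  ∀ ε > (0:ℝ), ∃ δ > (0:ℝ), ∀ a ∈ S, ∀ b ∈ S, Υ a b ≤ δ → ρ a b < ε

lemma not_gaugeTypeOn_of_tendsto {α : Type*} {S : Set α} {Υ ρ : α → α → ℝ} {p q : ℕ → α}
    {ε : ℝ} (hε : 0 < ε) (hΥ : Tendsto (fun n => Υ (p n) (q n)) atTop (𝓝 0))
    (hpq : ∀ᶠ n in atTop, p n ∈ S ∧ q n ∈ S ∧ ε ≤ ρ (p n) (q n)) : ¬ GaugeTypeOn S Υ ρ := by
  intro hgauge
  obtain ⟨δ, hδ, hsmall⟩ := hgauge ε hε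
  obtain ⟨n, hΥn, hpn, hqn, hρn⟩ := ((hΥ.eventually (eventually_le_nhds hδ)).and hpq).exists
  exact (hsmall _ hpn _ hqn hΥn).not_ge hρn

def rampPath (c a : ℝ) : Pth 1 := fun θ => EuclideanSpace.single 0 (min (max (a + c * θ.1) 0) 1)

lemma rampPath_mem_C0 {c : ℝ} (hc : 0 < c) (a : ℝ) : rampPath c a ∈ C0 1 := by
  refine ⟨(PiLp.continuous_toLp 2 _).comp ((continuous_single 0).comp (by fun_prop)), ?_⟩
  refine tendsto_const_nhds.congr' <| eventually_atBot.mpr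
    ⟨⟨min (-a / c) 0, min_le_right (-a / c) 0⟩, fun θ hθ => ?_⟩
  have hθ : θ.1 * c ≤ -a := (le_div_iff₀ hc).mp (le_trans hθ (min_le_left _ _))
  simp [rampPath, max_eq_right (show a + c * θ.1 ≤ 0 by linarith), eq_comm]

lemma shift_rampPath {c a h : ℝ} (hc : 0 ≤ c) (ha : 1 ≤ a) :
    shift (rampPath c a) h = rampPath c (a + c * h) := by
  funext θ
  unfold shift rampPath
  split_ifs with hθ
  · have hcθ : 0 ≤ c * (h + θ.1) := mul_nonneg hc (by linarith)
    simp only [zeroPt, mul_zero, add_zero]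
    rw [max_eq_left (by linarith), max_eq_left (by linarith), min_eq_right ha,
      min_eq_right (by linarith)]
  · rw [show a + c * (θ.1 + h) = a + c * h + c * θ.1 by ring]

lemma norm_rampPath_sub_rampPath_le (c a b : ℝ) (θ : PathDom) :
    ‖(rampPath c a - rampPath c b) θ‖ ≤ 1 := by
  rw [Pi.sub_apply, rampPath, rampPath, ← PiLp.single_sub, PiLp.norm_single, Real.norm_eq_abs,
    abs_sub_le_iff]
  constructor <;> linarith [min_le_right (max (a + c * θ.1) 0) 1,
    min_le_right (max (b + c * θ.1) 0) 1, le_min (le_max_right (a + c * θ.1) 0) zero_le_one,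
    le_min (le_max_right (b + c * θ.1) 0) zero_le_one]

lemma neg_div_le_iff_nonneg_add_mul {a c θ : ℝ} (hc : 0 < c) :
    -(a / c) ≤ θ ↔ 0 ≤ a + c * θ := by
  rw [neg_le, le_div_iff₀ hc]
  constructor <;> intro h <;> linarith

lemma remXn_eq_rampPath {n : ℕ} (hn : 1 ≤ n) : remXn n = rampPath n 1 := by
  have hn' : (0 : ℝ) < n := by exact_mod_cast hn
  funext θ
  unfold remXn rampPath
  congr 1
  split_ifs with hθ
  · rw [neg_div_le_iff_nonneg_add_mul hn'] at hθ
    have : (n : ℝ) * θ.1 ≤ 0 := mul_nonpos_of_nonneg_of_nonpos hn'.le θ.2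
    rw [max_eq_left hθ, min_eq_left (by linarith)]
  · rw [neg_div_le_iff_nonneg_add_mul hn', not_le] at hθ
    rw [max_eq_right hθ.le, min_eq_left zero_le_one]

lemma remYn_eq_rampPath {n : ℕ} (hn : 1 ≤ n) : remYn n = rampPath n 2 := by
  have hn' : (0 : ℝ) < n := by exact_mod_cast hn
  funext θ
  unfold remYn rampPath
  congr 1
  split_ifs with hθ
  · rw [neg_div_le_iff_nonneg_add_mul hn'] at hθ
    rw [max_eq_left hθ]
  · rw [neg_div_le_iff_nonneg_add_mul hn', not_le] at hθ
    rw [max_eq_right hθ.le, min_eq_left zero_le_one]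

lemma remXn_mem_C0 {n : ℕ} (hn : 1 ≤ n) : remXn n ∈ C0 1 :=
  remXn_eq_rampPath hn ▸ rampPath_mem_C0 (by exact_mod_cast hn) 1

lemma remYn_mem_C0 {n : ℕ} (hn : 1 ≤ n) : remYn n ∈ C0 1 :=
  remYn_eq_rampPath hn ▸ rampPath_mem_C0 (by exact_mod_cast hn) 2

lemma shift_remXn {n : ℕ} (hn : 1 ≤ n) : shift (remXn n) (1 / n) = remYn n := by
  have hn' : (0 : ℝ) < n := by exact_mod_cast hn
  rw [remXn_eq_rampPath hn, remYn_eq_rampPath hn, shift_rampPath hn'.le le_rfl,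
    mul_one_div_cancel hn'.ne']
  norm_num

lemma normC_remXn_sub_remYn {n : ℕ} (hn : 1 ≤ n) : normC (remXn n - remYn n) = 1 := by
  have hn' : (0 : ℝ) < n := by exact_mod_cast hn
  rw [remXn_eq_rampPath hn, remYn_eq_rampPath hn]
  refine normC_eq_of_forall_le (norm_rampPath_sub_rampPath_le _ _ _)
    ⟨-(1 / n), by simp only [Set.mem_Iic, Left.neg_nonpos_iff]; positivity⟩ ?_
  norm_num [rampPath, ← PiLp.single_sub, hn'.ne']

lemma upsBarP_remXn_remYn {n : ℕ} (hn : 1 ≤ n) :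
    UpsBarP 3 3 ((0 : ℝ), remXn n) (1 / (n : ℝ), remYn n) = (1 / (n : ℝ)) ^ 2 := by
  have hn' : (0 : ℝ) < n := by exact_mod_cast hn
  simpa using upsBarP_eq_sq_of_shift_eq (m := 3) (by norm_num) 3 (t := 0) (s := 1 / n)
    (by positivity) (by simpa using shift_remXn hn)

/-- Remark 3.2(iv): `Ῡ` is not a gauge-type function for the
norm metric `|t|+|x|_C` on `Λ`. -/
theorem upsBar_not_gauge_for_norm :
    (∀ n : ℕ, 1 ≤ n → remXn n ∈ C0 1 ∧ remYn n ∈ C0 1) ∧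
    Filter.Tendsto (fun n : ℕ => UpsBarP 3 3 ((0:ℝ), remXn n) (1 / (n:ℝ), remYn n))
      Filter.atTop (nhds 0) ∧
    (∀ n : ℕ, 1 ≤ n → normC (remXn n - remYn n) = 1) ∧
    ¬ (∀ ε > (0:ℝ), ∃ δ > (0:ℝ), ∀ p ∈ Lam 1 0, ∀ q ∈ Lam 1 0,
        UpsBarP 3 3 p q ≤ δ → |p.1 - q.1| + normC (p.2 - q.2) < ε) := by
  have htend : Tendsto (fun n : ℕ => UpsBarP 3 3 ((0:ℝ), remXn n) (1 / (n:ℝ), remYn n))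
      atTop (𝓝 0) := by
    refine (by simpa using (tendsto_one_div_atTop_nhds_zero_nat (𝕜 := ℝ)).pow 2 :
      Tendsto (fun n : ℕ => (1 / (n : ℝ)) ^ 2) atTop (𝓝 0)).congr' ?_
    filter_upwards [eventually_ge_atTop 1] with n hn
    exact (upsBarP_remXn_remYn hn).symm
  refine ⟨fun n hn => ⟨remXn_mem_C0 hn, remYn_mem_C0 hn⟩, htend,
    fun n hn => normC_remXn_sub_remYn hn,
    not_gaugeTypeOn_of_tendsto one_pos htend ?_⟩
  filter_upwards [eventually_ge_atTop 1] with n hn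
  refine ⟨⟨le_rfl, remXn_mem_C0 hn⟩, ⟨by positivity, remYn_mem_C0 hn⟩, ?_⟩
  rw [normC_remXn_sub_remYn hn]
  linarith [abs_nonneg ((0 : ℝ) - 1 / n)]
end PathHJB
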